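/- arXiv:1510.08379 — 4 statements merged into one kernel-verified Lean document; each statement's English description precedes it below -/
import Mathlib

section
/- Let H = sin²x/(2(1-ρ cos x))·(Px² + Py²) on T*((0,π)×ℝ) with parameter ρ ∈ (0,1), and let S₊ = e^y(sin x·Px·Py + cos x·Py² - ρH). Then the Poisson bracket {H, S₊} vanishes identically. -/
/-- The canonical Poisson bracket on `T*(ℝ²)` with coordinates `(x, y, Px, Py)`:
`{f,g} = ∂f/∂x·∂g/∂Px + ∂f/∂y·∂g/∂Py - ∂f/∂Px·∂g/∂x - ∂f/∂Py·∂g/∂y`. -/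
noncomputable def poissonBracket (f g : ℝ → ℝ → ℝ → ℝ → ℝ) (x y px py : ℝ) : ℝ :=
    deriv (fun x' => f x' y px py) x * deriv (fun px' => g x y px' py) px
  + deriv (fun y' => f x y' px py) y * deriv (fun py' => g x y px py') py
  - deriv (fun px' => f x y px' py) px * deriv (fun x' => g x' y px py) x
  - deriv (fun py' => f x y px py') py * deriv (fun y' => g x y' px py) y

/-- Trigonometric Koenigs Hamiltonian `H = sin²x/(2(1-ρ cos x))·(Px²+Py²)`. -/
noncomputable def Htrig (ρ x y px py : ℝ) : ℝ :=
  Real.sin x ^ 2 / (2 * (1 - ρ * Real.cos x)) * (px ^ 2 + py ^ 2)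

/-- The quadratic integral `S₊ = e^y(sin x·Px·Py + cos x·Py² - ρH)`. -/
noncomputable def Splus (ρ x y px py : ℝ) : ℝ :=
  Real.exp y * (Real.sin x * px * py + Real.cos x * py ^ 2 - ρ * Htrig ρ x y px py)

/-- For the trigonometric Koenigs system, `{H, S₊} = 0` on `T*((0,π)×ℝ)`. -/
theorem stmt3 (ρ : ℝ) (hρ : ρ ∈ Set.Ioo (0 : ℝ) 1) :
    ∀ x ∈ Set.Ioo (0 : ℝ) Real.pi, ∀ y px py : ℝ,
      poissonBracket (Htrig ρ) (Splus ρ) x y px py = 0 := by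
  obtain ⟨hρ0, hρ1⟩ := hρ
  intro x hx y px py
  have hD : (1 - ρ * Real.cos x) ≠ 0 := by
    have h1 := Real.cos_le_one x
    have h2 := Real.neg_one_le_cos x
    nlinarith
  have hD2 : (2 * (1 - ρ * Real.cos x)) ≠ 0 := by
    intro h; apply hD; linarith
  set s := Real.sin x
  set c := Real.cos x
  -- derivative of the denominator in x
  have hv : HasDerivAt (fun x' => 2 * (1 - ρ * Real.cos x')) (2 * (-(ρ * (-s)))) x :=
    (((Real.hasDerivAt_cos x).const_mul ρ).const_sub 1).const_mul 2
  have hu : HasDerivAt (fun x' => Real.sin x' ^ 2) ((2 : ℕ) * s ^ 1 * c) x := by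
    simpa using (Real.hasDerivAt_sin x).fun_pow 2
  have hHx : HasDerivAt (fun x' => Htrig ρ x' y px py)
      ((((2 : ℕ) * s ^ 1 * c * (2 * (1 - ρ * c)) - s ^ 2 * (2 * (-(ρ * (-s))))) /
        (2 * (1 - ρ * c)) ^ 2) * (px ^ 2 + py ^ 2)) x := by
    unfold Htrig
    exact (hu.div hv hD2).mul_const _
  have hHpx : HasDerivAt (fun px' => Htrig ρ x y px' py)
      (s ^ 2 / (2 * (1 - ρ * c)) * ((2 : ℕ) * px ^ 1)) px := by
    unfold Htrig
    exact ((hasDerivAt_pow 2 px).add_const (py ^ 2)).const_mul _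
  have hHpy : HasDerivAt (fun py' => Htrig ρ x y px py')
      (s ^ 2 / (2 * (1 - ρ * c)) * ((2 : ℕ) * py ^ 1)) py := by
    unfold Htrig
    exact ((hasDerivAt_pow 2 py).const_add (px ^ 2)).const_mul _
  have hHy : deriv (fun y' => Htrig ρ x y' px py) y = 0 := by
    simp [Htrig]
  -- derivatives of S
  have hSx : HasDerivAt (fun x' => Splus ρ x' y px py)
      (Real.exp y * ((c * px * py + (-s) * py ^ 2) -
        ρ * ((((2 : ℕ) * s ^ 1 * c * (2 * (1 - ρ * c)) - s ^ 2 * (2 * (-(ρ * (-s))))) /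
          (2 * (1 - ρ * c)) ^ 2) * (px ^ 2 + py ^ 2)))) x := by
    unfold Splus
    exact (((((Real.hasDerivAt_sin x).mul_const px).mul_const py).add
      ((Real.hasDerivAt_cos x).mul_const (py ^ 2))).sub (hHx.const_mul ρ)).const_mul _
  have hSy : HasDerivAt (fun y' => Splus ρ x y' px py)
      (Real.exp y * (s * px * py + c * py ^ 2 - ρ * Htrig ρ x y px py)) y := by
    unfold Splus Htrig
    exact (Real.hasDerivAt_exp y).mul_const _
  have hSpx : HasDerivAt (fun px' => Splus ρ x y px' py)
      (Real.exp y * ((s * py * 1) - ρ * (s ^ 2 / (2 * (1 - ρ * c)) * ((2 : ℕ) * px ^ 1)))) px := by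
    unfold Splus
    have h1 : HasDerivAt (fun px' : ℝ => s * px' * py) (s * py * 1) px := by
      simpa [mul_comm, mul_assoc, mul_left_comm] using
        ((hasDerivAt_id px).const_mul s).mul_const py
    exact ((h1.add_const (c * py ^ 2)).sub (hHpx.const_mul ρ)).const_mul _
  have hSpy : HasDerivAt (fun py' => Splus ρ x y px py')
      (Real.exp y * ((s * px * 1 + c * ((2 : ℕ) * py ^ 1)) -
        ρ * (s ^ 2 / (2 * (1 - ρ * c)) * ((2 : ℕ) * py ^ 1)))) py := by
    unfold Splus
    have h1 : HasDerivAt (fun py' : ℝ => s * px * py') (s * px * 1) py :=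
      (hasDerivAt_id py).const_mul (s * px)
    have h2 : HasDerivAt (fun py' : ℝ => c * py' ^ 2) (c * ((2 : ℕ) * py ^ 1)) py :=
      (hasDerivAt_pow 2 py).const_mul c
    exact ((h1.add h2).sub (hHpy.const_mul ρ)).const_mul _
  unfold poissonBracket
  rw [hHx.deriv, hHpx.deriv, hHpy.deriv, hHy, hSx.deriv, hSy.deriv, hSpx.deriv, hSpy.deriv]
  unfold Htrig
  simp only [show Real.sin x = s from rfl, show Real.cos x = c from rfl]
  have hD' : 1 - c * ρ ≠ 0 := by rwa [mul_comm]
  field_simp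
  ring
end

section
/- Define F(u) = σu² + 2(E + L²/2)u - L² on (0,1), with L > 0, σ = 2(ρ-1)E - ξ. If σ < -L², E + L²/2 > 0, ξ - 2ρE > 0 and (E + L²/2)² + L²σ ≥ 0, then F has two roots u± = L²/((E+L²/2) ∓ √Δ) with Δ = (E+L²/2)² + L²σ, satisfying 0 < u₋ ≤ L/√(-σ) ≤ u₊ < 1, and F > 0 exactly on (u₋, u₊). -/
open Set

/-- For `F(u) = σu² + 2(E+L²/2)u - L²` with `σ = 2(ρ-1)E - ξ < -L²`, `E + L²/2 > 0`,
`ξ - 2ρE > 0` and `Δ = (E+L²/2)² + L²σ ≥ 0`, the roots `u± = L²/((E+L²/2) ∓ √Δ)` satisfy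
`0 < u₋ ≤ L/√(-σ) ≤ u₊ < 1`, and `F > 0` exactly on `(u₋, u₊)`. -/
theorem stmt9 (E L ρ ξ : ℝ) (hL : 0 < L) (hρ : 0 < ρ)
    (σ : ℝ) (hσdef : σ = 2 * (ρ - 1) * E - ξ)
    (hσ : σ < -L ^ 2) (hE : E + L ^ 2 / 2 > 0) (hξ : ξ - 2 * ρ * E > 0)
    (Δ : ℝ) (hΔdef : Δ = (E + L ^ 2 / 2) ^ 2 + L ^ 2 * σ) (hΔ : 0 ≤ Δ) :
    let F : ℝ → ℝ := fun u => σ * u ^ 2 + 2 * (E + L ^ 2 / 2) * u - L ^ 2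
    let um : ℝ := L ^ 2 / (E + L ^ 2 / 2 + Real.sqrt Δ)
    let up : ℝ := L ^ 2 / (E + L ^ 2 / 2 - Real.sqrt Δ)
    F um = 0 ∧ F up = 0 ∧
    0 < um ∧ um ≤ L / Real.sqrt (-σ) ∧ L / Real.sqrt (-σ) ≤ up ∧ up < 1 ∧
    ∀ u : ℝ, 0 < F u ↔ u ∈ Ioo um up := by
  intro F um up
  have hFdef : ∀ u : ℝ, F u = σ * u ^ 2 + 2 * (E + L ^ 2 / 2) * u - L ^ 2 := fun u => rfl
  have hum : um = L ^ 2 / (E + L ^ 2 / 2 + Real.sqrt Δ) := rfl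
  have hup : up = L ^ 2 / (E + L ^ 2 / 2 - Real.sqrt Δ) := rfl
  obtain ⟨B, hB⟩ : ∃ b, b = E + L ^ 2 / 2 := ⟨_, rfl⟩
  obtain ⟨s, hsd⟩ : ∃ x, x = Real.sqrt Δ := ⟨_, rfl⟩
  rw [← hB] at hE hΔdef
  rw [← hB, ← hsd] at hum hup
  have hFdef' : ∀ u : ℝ, F u = σ * u ^ 2 + 2 * B * u - L ^ 2 := by
    rw [hB]; exact hFdef
  have hL2 : (0:ℝ) < L ^ 2 := by positivity
  have hs0 : 0 ≤ s := hsd ▸ Real.sqrt_nonneg _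
  have hs2 : s ^ 2 = B ^ 2 + L ^ 2 * σ := by rw [hsd, Real.sq_sqrt hΔ, hΔdef]
  have hσneg : σ < 0 := by nlinarith
  have hsB : s < B := by nlinarith [mul_lt_mul_of_pos_left hσ hL2]
  have hBs : 0 < B + s := by linarith
  have hBs' : 0 < B - s := by linarith
  have hkeyid : (B - L ^ 2) ^ 2 - s ^ 2 = L ^ 2 * (ξ - 2 * ρ * E) := by
    rw [hs2, hB, hσdef]; ring
  have hkey : s ^ 2 < (B - L ^ 2) ^ 2 := by nlinarith [mul_pos hL2 hξ]
  have hBL2 : 0 < B - L ^ 2 := by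
    nlinarith [mul_lt_mul_of_pos_left hσ hL2, sq_nonneg s]
  have hBL : L ^ 2 < B - s := by
    have hpos : 0 < B - L ^ 2 + s := by linarith
    nlinarith
  have hum_pos : 0 < um := by rw [hum]; positivity
  have hσpos : 0 < -σ := by linarith
  have humv2 : um = (B - s) / (-σ) := by
    rw [hum, div_eq_div_iff hBs.ne' (by linarith : (0:ℝ) < -σ).ne']
    linear_combination hs2
  have hupv2 : up = (B + s) / (-σ) := by
    rw [hup, div_eq_div_iff hBs'.ne' (by linarith : (0:ℝ) < -σ).ne']
    linear_combination hs2
  have hσne : σ ≠ 0 := ne_of_lt hσneg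
  have hFum : F um = 0 := by
    rw [hFdef', humv2]
    field_simp
    first
    | linear_combination (-(σ ^ 2)) * hs2
    | linear_combination (σ ^ 2) * hs2
    | linear_combination (-(σ ^ 2) - 1) * hs2
    | linear_combination (σ ^ 2 + 1) * hs2
    | linear_combination (1 - σ ^ 2) * hs2
    | linear_combination (σ ^ 2 - 1) * hs2
    | linear_combination σ * hs2
    | linear_combination (-σ) * hs2
    | linear_combination hs2
    | linear_combination -hs2
  have hFup : F up = 0 := by
    rw [hFdef', hupv2]
    field_simp
    first
    | linear_combination (-(σ ^ 2)) * hs2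
    | linear_combination (σ ^ 2) * hs2
    | linear_combination (-(σ ^ 2) - 1) * hs2
    | linear_combination (σ ^ 2 + 1) * hs2
    | linear_combination (1 - σ ^ 2) * hs2
    | linear_combination (σ ^ 2 - 1) * hs2
    | linear_combination σ * hs2
    | linear_combination (-σ) * hs2
    | linear_combination hs2
    | linear_combination -hs2
  obtain ⟨t, htd⟩ : ∃ x, x = Real.sqrt (-σ) := ⟨_, rfl⟩
  have ht0 : 0 < t := htd ▸ Real.sqrt_pos.mpr hσpos
  have ht2 : t ^ 2 = -σ := by rw [htd, Real.sq_sqrt (le_of_lt hσpos)]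
  have hLt2 : (L * t) ^ 2 = B ^ 2 - s ^ 2 := by
    linear_combination L ^ 2 * ht2 + hs2
  have hLtpos : 0 ≤ L * t := by positivity
  have h1 : um ≤ L / t := by
    rw [hum, div_le_div_iff₀ hBs ht0]
    have hLt : L * t ≤ B + s := by
      have hsq : (L * t) ^ 2 ≤ (B + s) ^ 2 := by
        linarith [hLt2, mul_nonneg hs0 hBs.le]
      have h := Real.sqrt_le_sqrt hsq
      rwa [Real.sqrt_sq hLtpos, Real.sqrt_sq hBs.le] at h
    linarith [mul_le_mul_of_nonneg_left hLt hL.le]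
  have h2 : L / t ≤ up := by
    rw [hup, div_le_div_iff₀ ht0 hBs']
    have hLt : B - s ≤ L * t := by
      have hsq : (B - s) ^ 2 ≤ (L * t) ^ 2 := by
        linarith [hLt2, mul_nonneg hs0 hBs'.le]
      have h := Real.sqrt_le_sqrt hsq
      rwa [Real.sqrt_sq hBs'.le, Real.sqrt_sq hLtpos] at h
    linarith [mul_le_mul_of_nonneg_left hLt hL.le]
  have h3 : up < 1 := by
    rw [hup, div_lt_one hBs']
    exact hBL
  have humup : um ≤ up := by
    rw [humv2, hupv2]
    first
    | · rw [div_le_div_right hσpos]; linarith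
    | exact div_le_div_of_nonneg (by linarith) le_rfl (by linarith) hσpos
    | gcongr <;> linarith
  rw [← htd]
  refine ⟨hFum, hFup, hum_pos, h1, h2, h3, fun u => ?_⟩
  have hfact : F u = σ * (u - um) * (u - up) := by
    rw [hFdef', humv2, hupv2]
    field_simp
    ring_nf
    first
    | linear_combination σ * hs2
    | linear_combination (-σ) * hs2
    | linear_combination hs2
    | linear_combination -hs2
    | linear_combination (σ * u) * hs2
    | linear_combination (u) * hs2
  rw [hfact]
  constructor
  · intro hFu
    constructor
    · by_contra hc
      push_neg at hc
      have h4 : u ≤ up := le_trans hc humup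
      linarith [mul_nonneg (mul_nonneg hσpos.le (sub_nonneg.mpr hc)) (sub_nonneg.mpr h4)]
    · by_contra hc
      push_neg at hc
      have h4 : um ≤ u := le_trans humup hc
      linarith [mul_nonneg (mul_nonneg hσpos.le (sub_nonneg.mpr h4)) (sub_nonneg.mpr hc)]
  · rintro ⟨hl, hr⟩
    linarith [mul_pos (mul_pos hσpos (sub_pos.mpr hl)) (sub_pos.mpr hr)]
end

section
/- For E ∈ [E₊, ξ/(2ρ)) with ξ > 0, ρ > 0, L > 0 and E₊ = L²(-ρ + √(ρ² + ξ/L²)), the eccentricity e = √(1 + (L²/E²)(2ρE - ξ)) satisfies 0 ≤ e < 1; hence the curve L²/(E r²) = 1 + e·cos(2φ) is a closed bounded curve (an ellipse in the variable 1/r²). -/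
/-- For `E ∈ [E₊, ξ/(2ρ))` with `ρ, ξ, L > 0` and `E₊ = L²(-ρ + √(ρ² + ξ/L²))`,
one has `E > 0`, `Δ := E² + L²(2ρE - ξ)` satisfies `0 ≤ Δ < E²`, and the eccentricity
`e = √(1 + (L²/E²)(2ρE - ξ))` satisfies `0 ≤ e < 1`, so the curve
`L²/(Er²) = 1 + e cos(2φ)` is closed and bounded. -/
theorem stmt10 (ρ ξ L E : ℝ) (hρ : 0 < ρ) (hξ : 0 < ξ) (hL : 0 < L)
    (hE₁ : L ^ 2 * (-ρ + Real.sqrt (ρ ^ 2 + ξ / L ^ 2)) ≤ E)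
    (hE₂ : E < ξ / (2 * ρ)) :
    0 < E ∧
    0 ≤ E ^ 2 + L ^ 2 * (2 * ρ * E - ξ) ∧
    E ^ 2 + L ^ 2 * (2 * ρ * E - ξ) < E ^ 2 ∧
    0 ≤ Real.sqrt (1 + L ^ 2 / E ^ 2 * (2 * ρ * E - ξ)) ∧
    Real.sqrt (1 + L ^ 2 / E ^ 2 * (2 * ρ * E - ξ)) < 1 := by
  have hL2 : (0:ℝ) < L ^ 2 := by positivity
  set s := Real.sqrt (ρ ^ 2 + ξ / L ^ 2) with hs
  have hsnn : 0 ≤ s := Real.sqrt_nonneg _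
  have hs2 : s ^ 2 = ρ ^ 2 + ξ / L ^ 2 := Real.sq_sqrt (by positivity)
  have hsρ : ρ < s := by
    nlinarith [div_pos hξ hL2]
  have hE0 : 0 < E := lt_of_lt_of_le (by nlinarith) hE₁
  have hΔ0 : 0 ≤ E ^ 2 + L ^ 2 * (2 * ρ * E - ξ) := by
    have h1 : L ^ 2 * (s - ρ) ≤ E := by nlinarith
    have h2 : L ^ 2 * s ≤ E + L ^ 2 * ρ := by nlinarith
    have h3 : (L ^ 2 * s) ^ 2 ≤ (E + L ^ 2 * ρ) ^ 2 := by
      apply sq_le_sq' <;> nlinarith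
    have : (L ^ 2) ^ 2 * (ρ ^ 2 + ξ / L ^ 2) ≤ (E + L ^ 2 * ρ) ^ 2 := by
      nlinarith
    have hfd : (L ^ 2) ^ 2 * (ξ / L ^ 2) = L ^ 2 * ξ := by
      field_simp
    nlinarith
  have hΔlt : E ^ 2 + L ^ 2 * (2 * ρ * E - ξ) < E ^ 2 := by
    have h : E * (2 * ρ) < ξ := (lt_div_iff₀ (by positivity)).mp hE₂
    nlinarith
  have hE2 : (0:ℝ) < E ^ 2 := by positivity
  have key : 1 + L ^ 2 / E ^ 2 * (2 * ρ * E - ξ) =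
      (E ^ 2 + L ^ 2 * (2 * ρ * E - ξ)) / E ^ 2 := by
    field_simp
  refine ⟨hE0, hΔ0, hΔlt, Real.sqrt_nonneg _, ?_⟩
  rw [key]
  have h1 : (E ^ 2 + L ^ 2 * (2 * ρ * E - ξ)) / E ^ 2 < 1 := by
    rw [div_lt_one hE2]; exact hΔlt
  calc Real.sqrt _ < Real.sqrt 1 := by
        exact Real.sqrt_lt_sqrt (by positivity) h1
    _ = 1 := Real.sqrt_one
end

section
/- For ρ ∈ (0,1)∪(1,∞), ξ̃ > 0, the map E ↦ √(ξ̃ - 2(ρ-1)E) - √(ξ̃ - 2ρE) is a strictly increasing bijection from (0, ξ̃/(2ρ)) onto (0, √(ξ̃/ρ)), with inverse J ↦ J(√(ξ̃ + ρ(ρ-1)J²) - (ρ - 1/2)J). -/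
open Set

private lemma stmt14_facts (ρ ξt E : ℝ) (hρ : 0 < ρ) (hE0 : 0 < E)
    (hE1 : E < ξt / (2 * ρ)) :
    (Real.sqrt (ξt - 2 * ρ * E)) ^ 2 = ξt - 2 * ρ * E ∧
    (Real.sqrt (ξt - 2 * (ρ - 1) * E)) ^ 2 = ξt - 2 * (ρ - 1) * E ∧
    0 < Real.sqrt (ξt - 2 * ρ * E) ∧
    Real.sqrt (ξt - 2 * ρ * E) < Real.sqrt (ξt - 2 * (ρ - 1) * E) := by
  have h2ρ : (0:ℝ) < 2 * ρ := by linarith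
  have hb0 : 0 < ξt - 2 * ρ * E := by
    rw [lt_div_iff₀ h2ρ] at hE1; nlinarith
  have ha0 : 0 < ξt - 2 * (ρ - 1) * E := by nlinarith
  refine ⟨Real.sq_sqrt hb0.le, Real.sq_sqrt ha0.le, Real.sqrt_pos.mpr hb0, ?_⟩
  exact Real.sqrt_lt_sqrt hb0.le (by nlinarith)

set_option maxHeartbeats 800000 in
/-- For `ρ > 0`, `ρ ≠ 1`, `ξ̃ > 0`, the map
`E ↦ √(ξ̃ - 2(ρ-1)E) - √(ξ̃ - 2ρE)` is a strictly increasing bijection from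
`(0, ξ̃/(2ρ))` onto `(0, √(ξ̃/ρ))`, with inverse
`J ↦ J(√(ξ̃ + ρ(ρ-1)J²) - (ρ - 1/2)J)`. -/
theorem stmt14 (ρ ξt : ℝ) (hρ : 0 < ρ) (hρ1 : ρ ≠ 1) (hξ : 0 < ξt) :
    let f : ℝ → ℝ := fun E =>
      Real.sqrt (ξt - 2 * (ρ - 1) * E) - Real.sqrt (ξt - 2 * ρ * E)
    let g : ℝ → ℝ := fun J =>
      J * (Real.sqrt (ξt + ρ * (ρ - 1) * J ^ 2) - (ρ - 1 / 2) * J)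
    StrictMonoOn f (Ioo 0 (ξt / (2 * ρ))) ∧
    BijOn f (Ioo 0 (ξt / (2 * ρ))) (Ioo 0 (Real.sqrt (ξt / ρ))) ∧
    ∀ E ∈ Ioo (0 : ℝ) (ξt / (2 * ρ)), g (f E) = E := by
  intro f g
  have h2ρ : (0:ℝ) < 2 * ρ := by linarith
  -- inverse identity
  have hinv : ∀ E ∈ Ioo (0 : ℝ) (ξt / (2 * ρ)), g (f E) = E := by
    rintro E ⟨hE0, hE1⟩
    obtain ⟨hb2, ha2, hb0, hab⟩ := stmt14_facts ρ ξt E hρ hE0 hE1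
    set b := Real.sqrt (ξt - 2 * ρ * E) with hbdef
    set a := Real.sqrt (ξt - 2 * (ρ - 1) * E) with hadef
    have hfe : f E = a - b := rfl
    have hS : ξt + ρ * (ρ - 1) * (a - b) ^ 2 = (ρ * a - (ρ - 1) * b) ^ 2 := by
      nlinarith [ha2, hb2]
    have hSpos : 0 ≤ ρ * a - (ρ - 1) * b := by nlinarith [hb0.le, hab.le]
    have hsq : Real.sqrt (ξt + ρ * (ρ - 1) * (a - b) ^ 2) = ρ * a - (ρ - 1) * b := by
      rw [hS, Real.sqrt_sq hSpos]
    show (a - b) * (Real.sqrt (ξt + ρ * (ρ - 1) * (a - b) ^ 2) - (ρ - 1/2) * (a - b)) = E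
    rw [hsq]
    nlinarith [ha2, hb2]
  -- strict monotonicity
  have hmono : StrictMonoOn f (Ioo 0 (ξt / (2 * ρ))) := by
    rintro E₁ ⟨h10, h11⟩ E₂ ⟨h20, h21⟩ h12
    obtain ⟨hb2₁, ha2₁, hb0₁, hab₁⟩ := stmt14_facts ρ ξt E₁ hρ h10 h11
    obtain ⟨hb2₂, ha2₂, hb0₂, hab₂⟩ := stmt14_facts ρ ξt E₂ hρ h20 h21
    set b₁ := Real.sqrt (ξt - 2 * ρ * E₁)
    set a₁ := Real.sqrt (ξt - 2 * (ρ - 1) * E₁)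
    set b₂ := Real.sqrt (ξt - 2 * ρ * E₂)
    set a₂ := Real.sqrt (ξt - 2 * (ρ - 1) * E₂)
    show a₁ - b₁ < a₂ - b₂
    have hbb : b₂ < b₁ := Real.sqrt_lt_sqrt (by nlinarith [hb2₂]) (by nlinarith)
    rcases lt_or_gt_of_ne hρ1 with hlt | hgt
    · -- ρ < 1 : a increasing, b decreasing
      have haa : a₁ < a₂ := Real.sqrt_lt_sqrt (by nlinarith [ha2₁]) (by nlinarith)
      linarith
    · -- ρ > 1 : use f E = 2E/(a+b)
      have haa : a₂ < a₁ := Real.sqrt_lt_sqrt (by nlinarith [ha2₂]) (by nlinarith)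
      have h1 : (a₁ - b₁) * (a₁ + b₁) = 2 * E₁ := by nlinarith [ha2₁, hb2₁]
      have h2 : (a₂ - b₂) * (a₂ + b₂) = 2 * E₂ := by nlinarith [ha2₂, hb2₂]
      have hs1 : 0 < a₁ + b₁ := by linarith [hab₁, hb0₁]
      have hs2 : 0 < a₂ + b₂ := by linarith [hab₂, hb0₂]
      have hss : a₂ + b₂ < a₁ + b₁ := by linarith
      have e1 : a₁ - b₁ = 2 * E₁ / (a₁ + b₁) := by
        rw [eq_div_iff hs1.ne']; linarith [h1]
      have e2 : a₂ - b₂ = 2 * E₂ / (a₂ + b₂) := by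
        rw [eq_div_iff hs2.ne']; linarith [h2]
      rw [e1, e2]
      calc 2 * E₁ / (a₁ + b₁) < 2 * E₂ / (a₁ + b₁) := by
            apply div_lt_div_of_pos_right (by linarith) hs1
        _ < 2 * E₂ / (a₂ + b₂) := by
            apply div_lt_div_of_pos_left (by linarith) hs2 hss
  refine ⟨hmono, ⟨?_, hmono.injOn, ?_⟩, hinv⟩
  · -- MapsTo
    rintro E ⟨hE0, hE1⟩
    obtain ⟨hb2, ha2, hb0, hab⟩ := stmt14_facts ρ ξt E hρ hE0 hE1
    set b := Real.sqrt (ξt - 2 * ρ * E)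
    set a := Real.sqrt (ξt - 2 * (ρ - 1) * E)
    constructor
    · show 0 < a - b; linarith
    · show a - b < Real.sqrt (ξt / ρ)
      refine (Real.lt_sqrt (by linarith)).mpr ?_
      rw [lt_div_iff₀ hρ]
      nlinarith [ha2, hb2, mul_pos hb0 (show 0 < 2*ρ*(a - b) + b by nlinarith [hb0])]
  · -- SurjOn
    rintro J ⟨hJ0, hJ1⟩
    have hJρ : ρ * J ^ 2 < ξt := by
      have := (Real.lt_sqrt hJ0.le).mp hJ1
      rw [lt_div_iff₀ hρ] at this; nlinarith
    have hin : 0 ≤ ξt + ρ * (ρ - 1) * J ^ 2 := by nlinarith [sq_nonneg (ρ * J)]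
    set S := Real.sqrt (ξt + ρ * (ρ - 1) * J ^ 2) with hSdef
    have hS2 : S ^ 2 = ξt + ρ * (ρ - 1) * J ^ 2 := Real.sq_sqrt hin
    have hSJ : ρ * J < S := by
      have : (ρ * J) ^ 2 < S ^ 2 := by nlinarith
      nlinarith [Real.sqrt_nonneg (ξt + ρ * (ρ - 1) * J ^ 2), mul_pos hρ hJ0]
    set E := J * (S - (ρ - 1/2) * J) with hEdef
    have hE0 : 0 < E := by
      apply mul_pos hJ0; nlinarith
    have hbsq : ξt - 2 * ρ * E = (S - ρ * J) ^ 2 := by rw [hEdef]; nlinarith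
    have hasq : ξt - 2 * (ρ - 1) * E = (S - (ρ - 1) * J) ^ 2 := by rw [hEdef]; nlinarith
    have hE1 : E < ξt / (2 * ρ) := by
      rw [lt_div_iff₀ h2ρ]; nlinarith [sq_nonneg (S - ρ * J), hSJ]
    refine ⟨E, ⟨hE0, hE1⟩, ?_⟩
    show Real.sqrt (ξt - 2 * (ρ - 1) * E) - Real.sqrt (ξt - 2 * ρ * E) = J
    rw [hbsq, hasq, Real.sqrt_sq (by nlinarith), Real.sqrt_sq (by nlinarith)]
    ring
end
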